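/- arXiv:1901.01385 — 3 statements merged into one kernel-verified Lean document; each statement's English description precedes it below -/
import Mathlib

section
/- Let K be a field, let A and B be associative unital K-algebras, and let I ⊆ A and J ⊆ B be two-sided ideals. Let Γ and Δ denote the ℤ-gradings of the extended Rees algebras R_A(I) and R_B(J) by powers of T. Then the following are equivalent: (1) there exists a graded K-algebra isomorphism R_A(I) ≅ R_B(J); (2) there exists a graded K-algebra isomorphism R_A(I) ≅ R_B(J) that maps T to T (a graded K[t]-isomorphism); (3) there exists a K-algebra isomorphism θ : A ≅ B with θ(I) = J. -/
open scoped AddMonoidAlgebra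

section Rees

variable {K : Type} [Field K] {A : Type} [Ring A] [Algebra K A]

/-- A `K`-submodule of `A` is a two-sided ideal if it absorbs multiplication by arbitrary
ring elements on both sides. -/
def Submodule.IsTwoSidedIdeal (I : Submodule K A) : Prop :=
  ∀ a : A, ∀ x ∈ I, a * x ∈ I ∧ x * a ∈ I

theorem Submodule.IsTwoSidedIdeal.mul_mem_pow_left {I : Submodule K A}
    (hI : I.IsTwoSidedIdeal) {l : ℕ} (hl : l ≠ 0) (a : A) {x : A} (hx : x ∈ I ^ l) :
    a * x ∈ I ^ l := by
  obtain ⟨l, rfl⟩ := Nat.exists_eq_succ_of_ne_zero hl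
  rw [pow_succ'] at hx ⊢
  refine Submodule.mul_induction_on hx (fun m hm n hn => ?_) (fun x y hx hy => ?_)
  · rw [← mul_assoc]
    exact Submodule.mul_mem_mul ((hI a m hm).1) hn
  · rw [mul_add]
    exact add_mem hx hy

theorem Submodule.IsTwoSidedIdeal.mul_mem_pow_right {I : Submodule K A}
    (hI : I.IsTwoSidedIdeal) {l : ℕ} (hl : l ≠ 0) (a : A) {x : A} (hx : x ∈ I ^ l) :
    x * a ∈ I ^ l := by
  obtain ⟨l, rfl⟩ := Nat.exists_eq_succ_of_ne_zero hl
  rw [pow_succ] at hx ⊢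
  refine Submodule.mul_induction_on hx (fun m hm n hn => ?_) (fun x y hx hy => ?_)
  · rw [mul_assoc]
    exact Submodule.mul_mem_mul hm ((hI a n hn).2)
  · rw [add_mul]
    exact add_mem hx hy

theorem Submodule.IsTwoSidedIdeal.pow_le_pow {I : Submodule K A}
    (hI : I.IsTwoSidedIdeal) {l m : ℕ} (hl : l ≠ 0) (h : l ≤ m) :
    I ^ m ≤ I ^ l := by
  induction m, h using Nat.le_induction with
  | base => exact le_rfl
  | succ m hm ih =>
      rw [pow_succ]
      refine Submodule.mul_le.mpr fun x hx y hy => ?_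
      exact hI.mul_mem_pow_right hl y (ih hx)

/-- The extended Rees algebra of a two-sided ideal `I` of `A`:  the subalgebra of the Laurent
polynomial algebra `A[T,T⁻¹] = AddMonoidAlgebra A ℤ` consisting of the Laurent polynomials
`∑ₖ aₖ Tᵏ` with `aₖ ∈ I^(-k)` for every `k < 0`. -/
def extendedReesAlgebra (I : Submodule K A) (hI : I.IsTwoSidedIdeal) :
    Subalgebra K (AddMonoidAlgebra A ℤ) where
  carrier := {p | ∀ k : ℤ, k < 0 → p.coeff k ∈ I ^ (-k).toNat}
  zero_mem' := by
    intro k hk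
    simp only [AddMonoidAlgebra.coeff_zero, Finsupp.coe_zero, Pi.zero_apply]
    exact zero_mem _
  add_mem' := by
    intro p q hp hq k hk
    rw [AddMonoidAlgebra.coeff_add, Finsupp.add_apply]
    exact add_mem (hp k hk) (hq k hk)
  one_mem' := by
    intro k hk
    rw [AddMonoidAlgebra.one_def, AddMonoidAlgebra.coeff_single, Finsupp.single_apply, if_neg (by omega)]
    exact zero_mem _
  mul_mem' := by
    intro p q hp hq k hk
    classical
    rw [AddMonoidAlgebra.coeff_mul]
    refine Submodule.sum_mem _ fun i hi => Submodule.sum_mem _ fun j hj => ?_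
    show (if i + j = k then p.coeff i * q.coeff j else 0) ∈ I ^ (-k).toNat
    split_ifs with hij
    · by_cases h1 : i < 0 <;> by_cases h2 : j < 0
      · have h3 : (-i).toNat + (-j).toNat = (-k).toNat := by omega
        rw [← h3, pow_add]
        exact Submodule.mul_mem_mul (hp i h1) (hq j h2)
      · exact hI.mul_mem_pow_right (by omega) _
          (hI.pow_le_pow (by omega) (by omega) (hp i h1))
      · exact hI.mul_mem_pow_left (by omega) _
          (hI.pow_le_pow (by omega) (by omega) (hq j h2))
      · omega
    · exact zero_mem _
  algebraMap_mem' := by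
    intro c k hk
    rw [AddMonoidAlgebra.coe_algebraMap]
    simp only [Function.comp_apply]
    rw [AddMonoidAlgebra.coeff_single, Finsupp.single_apply, if_neg (by omega)]
    exact zero_mem _

end Rees

section Rees2

variable {K : Type} [Field K] {A : Type} [Ring A] [Algebra K A]

/-- The Laurent variable `T` in `A[T,T⁻¹] = AddMonoidAlgebra A ℤ`. -/
noncomputable def laurentT (A : Type) [Ring A] : AddMonoidAlgebra A ℤ :=
  AddMonoidAlgebra.single 1 1

theorem laurentT_mem (I : Submodule K A) (hI : I.IsTwoSidedIdeal) :
    laurentT A ∈ extendedReesAlgebra I hI := by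
  intro k hk
  rw [laurentT, AddMonoidAlgebra.coeff_single, Finsupp.single_apply, if_neg (by omega)]
  exact zero_mem _

/-- An algebra isomorphism between two extended Rees algebras is *graded* if it maps elements
homogeneous of degree `k` to elements homogeneous of degree `k`, for every `k ∈ ℤ`. -/
def IsGradedReesIso {B : Type} [Ring B] [Algebra K B]
    {I : Submodule K A} {hI : I.IsTwoSidedIdeal}
    {J : Submodule K B} {hJ : J.IsTwoSidedIdeal}
    (e : extendedReesAlgebra I hI ≃ₐ[K] extendedReesAlgebra J hJ) : Prop :=
  ∀ (x : extendedReesAlgebra I hI) (k : ℤ),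
    (x : AddMonoidAlgebra A ℤ).coeff.support ⊆ {k} →
      ((e x : AddMonoidAlgebra B ℤ)).coeff.support ⊆ {k}

end Rees2


/-!
A graded isomorphism `e : R_A(I) ≃ R_B(J)` commutes with taking homogeneous components, so its
inverse is graded too, and `e` restricts to an isomorphism `θ : A ≃ B` of the degree-zero parts.
For `a ∈ I` we have `a = (a T⁻¹) · T` in `R_A(I)`; the image of `a T⁻¹` has its `T⁻¹`-coefficient
`b` in `J` and `e T = c T` is homogeneous of degree one, so `θ a = b c ∈ J`. Applying this to
`e⁻¹` gives `θ(I) = J`. Conversely, `θ` applied coefficientwise maps `I ^ n` onto `J ^ n` for every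
`n`, hence `R_A(I)` onto `R_B(J)`, preserving degrees and `T`.
-/

namespace AlgEquiv

variable {R S S' : Type*} [CommSemiring R] [Semiring S] [Semiring S'] [Algebra R S] [Algebra R S']

noncomputable def ofSubalgebras (e : S ≃ₐ[R] S') (P : Subalgebra R S) (Q : Subalgebra R S')
    (h : ∀ x, x ∈ P ↔ e x ∈ Q) : P ≃ₐ[R] Q :=
  (e.subalgebraMap P).trans <| Subalgebra.equivOfEq _ _ <| by
    ext y
    refine ⟨?_, fun hy => ⟨e.symm y, (h _).mpr (by simpa using hy), by simp⟩⟩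
    rintro ⟨x, hx, rfl⟩
    exact (h x).mp hx

@[simp]
theorem ofSubalgebras_apply (e : S ≃ₐ[R] S') (P : Subalgebra R S) (Q : Subalgebra R S')
    (h : ∀ x, x ∈ P ↔ e x ∈ Q) (x : P) : (e.ofSubalgebras P Q h x : S') = e x :=
  rfl

end AlgEquiv

open AddMonoidAlgebra

theorem eq_single_of_support_subset {R M : Type*} [Semiring R] {p : R[M]} {m : M}
    (h : p.coeff.support ⊆ {m}) : p = single m (p.coeff m) :=
  coeff_injective (Finsupp.support_subset_singleton.mp h)

theorem mem_pow_iff_of_mem_iff {R A B : Type*} [CommSemiring R] [Semiring A] [Algebra R A]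
    [Semiring B] [Algebra R B] {I : Submodule R A} {J : Submodule R B} (θ : A ≃ₐ[R] B)
    (hθ : ∀ a, a ∈ I ↔ θ a ∈ J) (n : ℕ) (a : A) : a ∈ I ^ n ↔ θ a ∈ J ^ n := by
  have hJ_eq : J = I.map (θ : A →ₐ[R] B).toLinearMap := by
    ext b
    refine ⟨fun hb => ⟨θ.symm b, (hθ _).mpr (by simpa using hb), by simp⟩, ?_⟩
    rintro ⟨a, ha, rfl⟩
    exact (hθ a).mp ha
  rw [hJ_eq, ← Submodule.map_pow]
  refine ⟨Submodule.mem_map_of_mem, ?_⟩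
  rintro ⟨a', ha', h⟩
  exact θ.injective h ▸ ha'

section ReesAlgebra

variable {K : Type} [Field K] {A : Type} [Ring A] [Algebra K A]
  {I : Submodule K A} {hI : I.IsTwoSidedIdeal}

theorem mem_extendedReesAlgebra_iff {p : A[ℤ]} :
    p ∈ extendedReesAlgebra I hI ↔ ∀ k < 0, p.coeff k ∈ I ^ (-k).toNat :=
  Iff.rfl

theorem single_mem_extendedReesAlgebra_iff {k : ℤ} {a : A} :
    single k a ∈ extendedReesAlgebra I hI ↔ (k < 0 → a ∈ I ^ (-k).toNat) := by
  refine ⟨fun h hk => by simpa only [coeff_single, Finsupp.single_eq_same] using h k hk,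
    fun h j hj => ?_⟩
  classical
  rw [coeff_single, Finsupp.single_apply]
  split_ifs with hkj
  · subst hkj
    exact h hj
  · exact zero_mem _

variable (I hI) in
noncomputable def reesComponent (j : ℤ) (x : extendedReesAlgebra I hI) :
    extendedReesAlgebra I hI :=
  ⟨single j ((x : A[ℤ]).coeff j), single_mem_extendedReesAlgebra_iff.mpr (x.2 j)⟩

@[simp]
theorem coe_reesComponent (j : ℤ) (x : extendedReesAlgebra I hI) :
    (reesComponent I hI j x : A[ℤ]) = single j ((x : A[ℤ]).coeff j) :=
  rfl

theorem reesComponent_eq_zero_iff (j : ℤ) (x : extendedReesAlgebra I hI) :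
    reesComponent I hI j x = 0 ↔ (x : A[ℤ]).coeff j = 0 := by
  rw [← Subtype.val_inj, coe_reesComponent, ZeroMemClass.coe_zero, single_eq_zero]

theorem sum_reesComponent (x : extendedReesAlgebra I hI) :
    ∑ j ∈ (x : A[ℤ]).coeff.support, reesComponent I hI j x = x :=
  Subtype.ext <| by
    rw [AddSubmonoidClass.coe_finsetSum]
    exact sum_coeff_single _

variable (I hI) in
noncomputable def reesSingleZero : A →ₐ[K] extendedReesAlgebra I hI :=
  singleZeroAlgHom.codRestrict _ fun a => single_mem_extendedReesAlgebra_iff.mpr (by simp)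

@[simp]
theorem coe_reesSingleZero (a : A) : (reesSingleZero I hI a : A[ℤ]) = single 0 a :=
  rfl

theorem reesSingleZero_injective : Function.Injective (reesSingleZero I hI) :=
  fun _ _ h => single_right_injective (congrArg Subtype.val h)

theorem mem_range_reesSingleZero_iff {x : extendedReesAlgebra I hI} :
    x ∈ (reesSingleZero I hI).range ↔ (x : A[ℤ]).coeff.support ⊆ {0} := by
  refine ⟨?_, fun h => ⟨(x : A[ℤ]).coeff 0, Subtype.ext (eq_single_of_support_subset h).symm⟩⟩
  rintro ⟨a, rfl⟩
  exact Finsupp.support_single_subset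

end ReesAlgebra

section GradedIso

variable {K : Type} [Field K] {A B : Type} [Ring A] [Algebra K A] [Ring B] [Algebra K B]
  {I : Submodule K A} {hI : I.IsTwoSidedIdeal} {J : Submodule K B} {hJ : J.IsTwoSidedIdeal}
  {e : extendedReesAlgebra I hI ≃ₐ[K] extendedReesAlgebra J hJ}

namespace IsGradedReesIso

theorem coe_apply_eq_single (he : IsGradedReesIso e) {x : extendedReesAlgebra I hI} {k : ℤ}
    {a : A} (hx : (x : A[ℤ]) = single k a) :
    (e x : B[ℤ]) = single k ((e x : B[ℤ]).coeff k) :=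
  eq_single_of_support_subset <| he x k <| by rw [hx]; exact Finsupp.support_single_subset

theorem apply_reesComponent (he : IsGradedReesIso e) (j : ℤ) (x : extendedReesAlgebra I hI) :
    e (reesComponent I hI j x) = reesComponent J hJ j (e x) := by
  have hdeg (i : ℤ) := he.coe_apply_eq_single (coe_reesComponent i x)
  have hcoeff : (e x : B[ℤ]).coeff j = (e (reesComponent I hI j x) : B[ℤ]).coeff j := by
    conv_lhs => rw [← sum_reesComponent x, map_sum, AddSubmonoidClass.coe_finsetSum, coeff_sum,
      Finsupp.finsetSum_apply]
    refine Finset.sum_eq_single j (fun i _ hij => ?_) (fun hj => ?_)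
    · rw [hdeg i, coeff_single, Finsupp.single_eq_of_ne hij.symm]
    · rw [(reesComponent_eq_zero_iff j x).mpr (Finsupp.notMem_support_iff.mp hj), map_zero]
      rfl
  exact Subtype.ext <| by rw [hdeg j, coe_reesComponent, hcoeff]

theorem symm (he : IsGradedReesIso e) : IsGradedReesIso e.symm := by
  intro y k hy j hj
  by_contra hjk
  have hy_j : reesComponent J hJ j y = 0 :=
    (reesComponent_eq_zero_iff j y).mpr (Finsupp.notMem_support_iff.mp fun h => hjk (hy h))
  have hx_j : reesComponent I hI j (e.symm y) = 0 := by
    rw [← map_eq_zero_iff e e.injective, he.apply_reesComponent, e.apply_symm_apply, hy_j]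
  exact Finsupp.mem_support_iff.mp hj ((reesComponent_eq_zero_iff j _).mp hx_j)

theorem apply_mem_range_reesSingleZero_iff (he : IsGradedReesIso e) (x : extendedReesAlgebra I hI) :
    e x ∈ (reesSingleZero J hJ).range ↔ x ∈ (reesSingleZero I hI).range := by
  simp only [mem_range_reesSingleZero_iff]
  exact ⟨fun h => by simpa using he.symm (e x) 0 h, he x 0⟩

noncomputable def degreeZeroEquiv (he : IsGradedReesIso e) : A ≃ₐ[K] B :=
  (AlgEquiv.ofInjective _ reesSingleZero_injective).trans <|
    (e.ofSubalgebras _ _ fun x => (he.apply_mem_range_reesSingleZero_iff x).symm).trans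
      (AlgEquiv.ofInjective _ reesSingleZero_injective).symm

theorem reesSingleZero_degreeZeroEquiv (he : IsGradedReesIso e) (a : A) :
    reesSingleZero J hJ (he.degreeZeroEquiv a) = e (reesSingleZero I hI a) := by
  rw [degreeZeroEquiv, AlgEquiv.trans_apply, AlgEquiv.trans_apply,
    ← AlgEquiv.ofInjective_apply _ reesSingleZero_injective, AlgEquiv.apply_symm_apply]
  rfl

theorem mem_of_apply_reesSingleZero_eq (he : IsGradedReesIso e) {a : A} {b : B} (ha : a ∈ I)
    (hab : e (reesSingleZero I hI a) = reesSingleZero J hJ b) : b ∈ J := by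
  let x : extendedReesAlgebra I hI :=
    ⟨single (-1) a, single_mem_extendedReesAlgebra_iff.mpr fun _ => by simpa using ha⟩
  let t : extendedReesAlgebra I hI := ⟨laurentT A, laurentT_mem I hI⟩
  have hxt : x * t = reesSingleZero I hI a := Subtype.ext <| by
    simp [x, t, laurentT]
  have ht : (e t : B[ℤ]) = single 1 ((e t : B[ℤ]).coeff 1) := he.coe_apply_eq_single rfl
  have hb : b = (e x : B[ℤ]).coeff (-1) * (e t : B[ℤ]).coeff 1 := by
    have := congrArg (fun z : extendedReesAlgebra J hJ => (z : B[ℤ]).coeff 0)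
      (hab.symm.trans (congrArg e hxt).symm)
    simp only [coe_reesSingleZero, map_mul, Subalgebra.coe_mul] at this
    rw [ht, coeff_mul_single_apply] at this
    simpa using this
  have hx : (e x : B[ℤ]).coeff (-1) ∈ J := by simpa using (e x).2 (-1) (by norm_num)
  exact hb ▸ (hJ _ _ hx).2

theorem mem_iff_degreeZeroEquiv_mem (he : IsGradedReesIso e) (a : A) :
    a ∈ I ↔ he.degreeZeroEquiv a ∈ J := by
  refine ⟨fun ha => he.mem_of_apply_reesSingleZero_eq ha (he.reesSingleZero_degreeZeroEquiv a).symm,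
    fun ha => he.symm.mem_of_apply_reesSingleZero_eq ha ?_⟩
  rw [he.reesSingleZero_degreeZeroEquiv, e.symm_apply_apply]

end IsGradedReesIso

end GradedIso

section ReesEquivOfAlgEquiv

variable {K : Type} [Field K] {A B : Type} [Ring A] [Algebra K A] [Ring B] [Algebra K B]
  {I : Submodule K A} {J : Submodule K B} (hI : I.IsTwoSidedIdeal) (hJ : J.IsTwoSidedIdeal)
  (θ : A ≃ₐ[K] B) (hθ : ∀ a, a ∈ I ↔ θ a ∈ J)

noncomputable def reesEquivOfAlgEquiv : extendedReesAlgebra I hI ≃ₐ[K] extendedReesAlgebra J hJ :=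
  (mapAlgEquiv K ℤ θ).ofSubalgebras _ _ fun x => by
    simp only [mem_extendedReesAlgebra_iff, mapAlgEquiv_apply]
    exact forall₂_congr fun k _ => mem_pow_iff_of_mem_iff θ hθ _ _

@[simp]
theorem coeff_reesEquivOfAlgEquiv (x : extendedReesAlgebra I hI) (k : ℤ) :
    (reesEquivOfAlgEquiv hI hJ θ hθ x : B[ℤ]).coeff k = θ ((x : A[ℤ]).coeff k) := by
  simp [reesEquivOfAlgEquiv]

theorem isGradedReesIso_reesEquivOfAlgEquiv :
    IsGradedReesIso (reesEquivOfAlgEquiv hI hJ θ hθ) := by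
  intro x k hx j hj
  exact hx (by simpa using hj)

theorem reesEquivOfAlgEquiv_laurentT :
    reesEquivOfAlgEquiv hI hJ θ hθ ⟨laurentT A, laurentT_mem I hI⟩ =
      ⟨laurentT B, laurentT_mem J hJ⟩ := by
  ext k
  simp [laurentT]

end ReesEquivOfAlgEquiv

theorem rees_iso_tfae {K : Type} [Field K]
    {A : Type} [Ring A] [Algebra K A] {B : Type} [Ring B] [Algebra K B]
    (I : Submodule K A) (hI : I.IsTwoSidedIdeal)
    (J : Submodule K B) (hJ : J.IsTwoSidedIdeal) :
    List.TFAE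
      [ ∃ e : extendedReesAlgebra I hI ≃ₐ[K] extendedReesAlgebra J hJ, IsGradedReesIso e,
        ∃ e : extendedReesAlgebra I hI ≃ₐ[K] extendedReesAlgebra J hJ, IsGradedReesIso e ∧
          e ⟨laurentT A, laurentT_mem I hI⟩ = ⟨laurentT B, laurentT_mem J hJ⟩,
        ∃ θ : A ≃ₐ[K] B, ∀ a : A, a ∈ I ↔ θ a ∈ J ] := by
  tfae_have 1 → 3
  | ⟨_, he⟩ => ⟨he.degreeZeroEquiv, he.mem_iff_degreeZeroEquiv_mem⟩
  tfae_have 3 → 2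
  | ⟨θ, hθ⟩ => ⟨reesEquivOfAlgEquiv hI hJ θ hθ, isGradedReesIso_reesEquivOfAlgEquiv hI hJ θ hθ,
      reesEquivOfAlgEquiv_laurentT hI hJ θ hθ⟩
  tfae_have 2 → 1
  | ⟨e, he, _⟩ => ⟨e, he⟩
  tfae_finish
end

section
/- Let K be a field, n, m ≥ 1, A = FreeAlgebra K (Fin n), and let I and J be two-sided ideals of A such that A/I and A/J are isomorphic as K-algebras and A/I is generated as a K-algebra by m elements. Let B = FreeAlgebra K (Fin n ⊕ Fin m), let κ : A →ₐ[K] B be the canonical embedding onto the subalgebra generated by the x-generators, and let I' (resp. J') be the two-sided ideal of B generated by κ(I) (resp. κ(J)) together with the y-generators y_1, …, y_m. Then there exists a graded K-algebra isomorphism R_B(I') ≅ R_B(J') that maps T to T (i.e., the extended Rees algebras are K[t]-isomorphic; this is the statement that R_A(I)⟨y_1,…,y_m⟩ ≅_{K[t]} R_A(J)⟨y_1,…,y_m⟩, via the identification R_B(I') = R_A(I)⟨T⁻¹y_1,…,T⁻¹y_m⟩). -/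
open scoped AddMonoidAlgebra

section Span

variable (K : Type) [Field K] {B : Type} [Ring B] [Algebra K B]

/-- The two-sided ideal generated by a set, as a `K`-submodule. -/
def twoSidedClosure (s : Set B) : Submodule K B where
  carrier := (TwoSidedIdeal.span s : Set B)
  zero_mem' := zero_mem _
  add_mem' := fun h1 h2 => add_mem h1 h2
  smul_mem' := fun c x hx => by
    rw [Algebra.smul_def]
    exact TwoSidedIdeal.mul_mem_left _ _ _ hx

theorem twoSidedClosure_isTwoSidedIdeal (s : Set B) :
    (twoSidedClosure K s).IsTwoSidedIdeal :=
  fun _a _x hx => ⟨TwoSidedIdeal.mul_mem_left _ _ _ hx, TwoSidedIdeal.mul_mem_right _ _ _ hx⟩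

theorem subset_twoSidedClosure (s : Set B) : s ⊆ (twoSidedClosure K s : Set B) :=
  TwoSidedIdeal.subset_span

end Span

/-!
An automorphism `α` of `B = K⟨x, y⟩` with `α(I') = J'` acts coefficientwise on `B[T,T⁻¹]`; since
it transports every power of `I'` onto the same power of `J'`, it restricts to a graded isomorphism
of the extended Rees algebras fixing `T`.

To find `α`, write `I'` as the kernel of `B → A/I`, `x ↦ x̄`, `y ↦ 0`, and `J'` as the kernel of
`B → A/J ≅ A/I`, `x ↦ φ⁻¹(x̄)`, `y ↦ 0`. These two surjections differ by an automorphism of `B`: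
pass through `(x ↦ x̄, y ↦ c)` and `(x ↦ φ⁻¹(x̄), y ↦ c)`, where `c` generates `A/I`. Each of the
three steps changes the images of one block of variables only, and because the images of the other
block generate `A/I`, the change lifts to a triangular substitution `z ↦ z + q(z)`, with `q(z)` a
noncommutative polynomial in the other block.
-/

namespace extendedReesAlgebra

variable {K : Type} [Field K] {B C : Type} [Ring B] [Algebra K B] [Ring C] [Algebra K C]
  {I : Submodule K B} {hI : I.IsTwoSidedIdeal} {J : Submodule K C} {hJ : J.IsTwoSidedIdeal}

theorem map_mapAlgEquiv (α : B ≃ₐ[K] C) (h : I.map α.toLinearMap = J) :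
    (extendedReesAlgebra I hI).map (AddMonoidAlgebra.mapAlgEquiv K ℤ α : _ →ₐ[K] _) =
      extendedReesAlgebra J hJ := by
  have hpow (t : ℕ) (x : C) : α.symm x ∈ I ^ t ↔ x ∈ J ^ t := by
    subst h
    change _ ↔ x ∈ Submodule.map (α : B →ₐ[K] C).toLinearMap I ^ t
    rw [← Submodule.map_pow]
    exact (Submodule.mem_map_equiv (e := α.toLinearEquiv) _).symm
  ext p
  change p ∈ (AddMonoidAlgebra.mapAlgEquiv K ℤ α).toEquiv '' _ ↔ _
  rw [Set.mem_image_equiv]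
  exact forall₂_congr fun k _ => by simp [hpow]

noncomputable def congr (α : B ≃ₐ[K] C) (h : I.map α.toLinearMap = J) :
    extendedReesAlgebra I hI ≃ₐ[K] extendedReesAlgebra J hJ :=
  ((AddMonoidAlgebra.mapAlgEquiv K ℤ α).subalgebraMap _).trans
    (Subalgebra.equivOfEq _ _ (map_mapAlgEquiv α h))

theorem coe_congr_apply (α : B ≃ₐ[K] C) (h : I.map α.toLinearMap = J)
    (x : extendedReesAlgebra I hI) :
    (congr (hJ := hJ) α h x : AddMonoidAlgebra C ℤ) = AddMonoidAlgebra.mapAlgEquiv K ℤ α x := rfl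

theorem exists_isGradedReesIso_of_map_eq (α : B ≃ₐ[K] C) (h : I.map α.toLinearMap = J) :
    ∃ e : extendedReesAlgebra I hI ≃ₐ[K] extendedReesAlgebra J hJ, IsGradedReesIso e ∧
      e ⟨laurentT B, laurentT_mem I hI⟩ = ⟨laurentT C, laurentT_mem J hJ⟩ := by
  refine ⟨congr α h, fun x k hx l hl => hx ?_, Subtype.ext ?_⟩
  · contrapose! hl
    simpa [coe_congr_apply] using hl
  · simp [coe_congr_apply, laurentT, -LaurentPolynomial.single_eq_C_mul_T]

end extendedReesAlgebra

section Kernel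

variable {K : Type} [Field K] {A B C : Type} [Ring A] [Algebra K A] [Ring B] [Algebra K B]
  [Ring C] [Algebra K C]

theorem Submodule.IsTwoSidedIdeal.mkAlgHom_eq_zero_iff {I : Submodule K A}
    (hI : I.IsTwoSidedIdeal) (a : A) :
    RingQuot.mkAlgHom K (fun a b : A => a - b ∈ I) a = 0 ↔ a ∈ I := by
  let I₂ : TwoSidedIdeal A := .mk' I I.zero_mem I.add_mem I.neg_mem
    (fun {x y} h => (hI x y h).1) (fun {x y} h => (hI y x h).2)
  have hI₂ (x : A) : x ∈ I₂ ↔ x ∈ I := TwoSidedIdeal.mem_mk' ..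
  refine ⟨fun h => ?_, fun h => ?_⟩
  · -- the quotient map by `I₂` factors through `RingQuot`, and its kernel is `I₂`
    have hrel : ∀ ⦃x y : A⦄, x - y ∈ I → I₂.ringCon.mk' x = I₂.ringCon.mk' y := fun x y hxy =>
      (I₂.ringCon.eq).mpr ((I₂.rel_iff x y).mpr ((hI₂ _).mpr hxy))
    have hmk := RingQuot.lift_mkRingHom_apply I₂.ringCon.mk' hrel a
    rw [← RingQuot.mkAlgHom_coe K, RingHom.coe_coe, h, map_zero] at hmk
    rw [← hI₂, ← TwoSidedIdeal.ker_ringCon_mk' I₂, TwoSidedIdeal.mem_ker, ← hmk]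
  · simpa using RingQuot.mkAlgHom_rel K (s := fun a b : A => a - b ∈ I) (x := a) (y := 0) (by simpa)

theorem mem_twoSidedClosure_image_union_iff {θ : B →ₐ[K] A} {κ : A →ₐ[K] B}
    (hθκ : ∀ a, θ (κ a) = a) {S : Set B} (hS : ∀ s ∈ S, θ s = 0)
    (hκθ : ∀ z, z - κ (θ z) ∈ twoSidedClosure K S) (f : A →ₐ[K] C) {I : Submodule K A}
    (hf : ∀ a, f a = 0 ↔ a ∈ I) (z : B) :
    z ∈ twoSidedClosure K (κ '' I ∪ S) ↔ f (θ z) = 0 := by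
  refine ⟨fun hz => ?_, fun hz => ?_⟩
  · refine (TwoSidedIdeal.mem_ker (f.comp θ)).mp (TwoSidedIdeal.span_le.mpr ?_ hz)
    rintro s (⟨a, ha, rfl⟩ | hs)
    · simpa [TwoSidedIdeal.mem_ker, hθκ] using (hf a).mpr ha
    · simp [TwoSidedIdeal.mem_ker, hS s hs]
  · rw [← sub_add_cancel z (κ (θ z))]
    refine add_mem (TwoSidedIdeal.span_mono Set.subset_union_right (hκθ z)) ?_
    exact subset_twoSidedClosure K _ (Or.inl ⟨θ z, (hf _).mp hz, rfl⟩)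

end Kernel

namespace FreeAlgebra

section Substitution

variable {R : Type} [CommRing R] {Z : Type} {C : Type} [Ring C] [Algebra R C]

theorem lift_apply_eq_self_of_mem_adjoin {S : Set Z} {f : Z → FreeAlgebra R Z}
    (hf : ∀ z ∈ S, f z = ι R z) {p : FreeAlgebra R Z} (hp : p ∈ Algebra.adjoin R (ι R '' S)) :
    lift R f p = p :=
  AlgHom.adjoin_le_equalizer _ (AlgHom.id R _) (by rintro _ ⟨z, hz, rfl⟩; simp [hf z hz]) hp

noncomputable def shiftAlgEquiv (S : Set Z) (q : Z → FreeAlgebra R Z) (hq₀ : ∀ z ∈ S, q z = 0)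
    (hq : ∀ z, q z ∈ Algebra.adjoin R (ι R '' S)) : FreeAlgebra R Z ≃ₐ[R] FreeAlgebra R Z :=
  AlgEquiv.ofAlgHom (lift R fun z => ι R z + q z) (lift R fun z => ι R z - q z)
    (by
      ext z
      simp [lift_apply_eq_self_of_mem_adjoin (f := fun z => ι R z + q z)
        (fun z hz => by simp [hq₀ z hz]) (hq z)])
    (by
      ext z
      simp [lift_apply_eq_self_of_mem_adjoin (f := fun z => ι R z - q z)
        (fun z hz => by simp [hq₀ z hz]) (hq z)])

theorem lift_comp_shiftAlgEquiv (g : Z → C) {S : Set Z} {q : Z → FreeAlgebra R Z} (hq₀ hq) :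
    (lift R g).comp (shiftAlgEquiv S q hq₀ hq : _ →ₐ[R] _) =
      lift R fun z => g z + lift R g (q z) := by
  ext z
  simp [shiftAlgEquiv]

theorem exists_algEquiv_lift_comp_eq {S : Set Z} {g g' : Z → C}
    (hS : Algebra.adjoin R (g '' S) = ⊤) (hgg' : S.EqOn g g') :
    ∃ α : FreeAlgebra R Z ≃ₐ[R] FreeAlgebra R Z, (lift R g).comp (α : _ →ₐ[R] _) = lift R g' := by
  classical
  have hcorr (z : Z) : ∃ p ∈ Algebra.adjoin R (ι R '' S), lift R g p = g' z - g z := by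
    rw [← Subalgebra.mem_map, AlgHom.map_adjoin, Set.image_image]
    simp [hS]
  choose p hp hgp using hcorr
  let q z := if z ∈ S then 0 else p z
  refine ⟨shiftAlgEquiv S q (fun z hz => if_pos hz)
    (fun z => by by_cases hz : z ∈ S <;> simp [q, hz, hp]), ?_⟩
  rw [lift_comp_shiftAlgEquiv]
  congr 1
  funext z
  by_cases hz : z ∈ S
  · simp [q, hz, hgg' hz]
  · simp [q, hz, hgp]

theorem adjoin_range_comp_ι_eq_top {X : Type} {f : FreeAlgebra R X →ₐ[R] C}
    (hf : Function.Surjective f) : Algebra.adjoin R (Set.range (f ∘ ι R)) = ⊤ := by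
  rw [Algebra.adjoin_range_eq_range_freeAlgebra_lift, lift_comp_ι, AlgHom.range_eq_top]
  exact hf

variable {X Y : Type}

theorem exists_algEquiv_lift_sumElim_zero_comp_eq {a a' : X → C} (c : Y → C)
    (ha : Algebra.adjoin R (Set.range a) = ⊤) (ha' : Algebra.adjoin R (Set.range a') = ⊤)
    (hc : Algebra.adjoin R (Set.range c) = ⊤) :
    ∃ α : FreeAlgebra R (X ⊕ Y) ≃ₐ[R] FreeAlgebra R (X ⊕ Y),
      (lift R (Sum.elim a 0)).comp (α : FreeAlgebra R (X ⊕ Y) →ₐ[R] FreeAlgebra R (X ⊕ Y)) =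
        lift R (Sum.elim a' 0) := by
  obtain ⟨α₁, h₁⟩ := exists_algEquiv_lift_comp_eq (S := Set.range Sum.inl)
    (g := Sum.elim a 0) (g' := Sum.elim a c) (by rwa [← Set.range_comp])
    (by rintro _ ⟨x, rfl⟩; rfl)
  obtain ⟨α₂, h₂⟩ := exists_algEquiv_lift_comp_eq (S := Set.range Sum.inr)
    (g := Sum.elim a c) (g' := Sum.elim a' c) (by rwa [← Set.range_comp])
    (by rintro _ ⟨y, rfl⟩; rfl)
  obtain ⟨α₃, h₃⟩ := exists_algEquiv_lift_comp_eq (S := Set.range Sum.inl)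
    (g := Sum.elim a' c) (g' := Sum.elim a' 0) (by rwa [← Set.range_comp])
    (by rintro _ ⟨x, rfl⟩; rfl)
  refine ⟨α₃.trans (α₂.trans α₁), ?_⟩
  rw [← h₃, ← h₂, ← h₁]
  rfl

end Substitution

section Presentation

variable {K : Type} [Field K] {X Y C : Type} [Ring C] [Algebra K C]

theorem sub_lift_inl_mem_twoSidedClosure_range_inr (z : FreeAlgebra K (X ⊕ Y)) :
    z - lift K (fun x => ι K (Sum.inl x)) (lift K (Sum.elim (ι K) 0) z) ∈
      twoSidedClosure K (Set.range fun y : Y => ι K (Sum.inr y)) := by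
  set κ : FreeAlgebra K X →ₐ[K] FreeAlgebra K (X ⊕ Y) := lift K fun x => ι K (Sum.inl x)
  set θ : FreeAlgebra K (X ⊕ Y) →ₐ[K] FreeAlgebra K X := lift K (Sum.elim (ι K) 0)
  induction z using FreeAlgebra.induction with
  | grade0 r => simp
  | grade1 x =>
    rcases x with x | y
    · simp [κ, θ]
    · simpa [θ] using subset_twoSidedClosure K (Set.range fun y : Y => ι K (Sum.inr y)) ⟨y, rfl⟩
  | add u v hu hv =>
    rw [map_add, map_add, add_sub_add_comm]
    exact add_mem hu hv
  | mul u v hu hv =>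
    have hI := twoSidedClosure_isTwoSidedIdeal K
      (Set.range fun y : Y => (ι K (Sum.inr y) : FreeAlgebra K (X ⊕ Y)))
    rw [map_mul, map_mul,
      show u * v - κ (θ u) * κ (θ v) = u * (v - κ (θ v)) + (u - κ (θ u)) * κ (θ v) by noncomm_ring]
    exact add_mem (hI u _ hv).1 (hI _ _ hu).2

theorem mem_twoSidedClosure_iff_lift_sumElim_eq_zero (f : FreeAlgebra K X →ₐ[K] C)
    {I : Submodule K (FreeAlgebra K X)} (hf : ∀ a, f a = 0 ↔ a ∈ I) (z : FreeAlgebra K (X ⊕ Y)) :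
    z ∈ twoSidedClosure K ((lift K fun x => ι K (Sum.inl x)) '' (I : Set (FreeAlgebra K X)) ∪
        Set.range fun y : Y => ι K (Sum.inr y)) ↔
      lift K (Sum.elim (f ∘ ι K) 0) z = 0 := by
  have hfθ : lift K (Sum.elim (f ∘ ι K) 0) = f.comp (lift K (Sum.elim (ι K) (0 : Y → _))) := by
    ext (x | y) <;> simp
  rw [hfθ, AlgHom.comp_apply]
  refine mem_twoSidedClosure_image_union_iff (fun a => ?_) ?_
    sub_lift_inl_mem_twoSidedClosure_range_inr f hf z
  · rw [← AlgHom.comp_apply, show (lift K (Sum.elim (ι K) (0 : Y → _))).comp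
      (lift K fun x => ι K (Sum.inl x)) = AlgHom.id K _ by ext; simp, AlgHom.id_apply]
  · rintro _ ⟨y, rfl⟩
    simp

end Presentation

end FreeAlgebra


open FreeAlgebra in
theorem rees_algebras_of_extended_ideals_isomorphic_general
    {K : Type} [Field K] {n m : ℕ}
    (I J : Submodule K (FreeAlgebra K (Fin n)))
    (hI : I.IsTwoSidedIdeal) (hJ : J.IsTwoSidedIdeal)
    (hiso : Nonempty
      (RingQuot (fun a b : FreeAlgebra K (Fin n) => a - b ∈ I) ≃ₐ[K]
        RingQuot (fun a b : FreeAlgebra K (Fin n) => a - b ∈ J)))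
    (hgen : ∃ c : Fin m → RingQuot (fun a b : FreeAlgebra K (Fin n) => a - b ∈ I),
      Algebra.adjoin K (Set.range c) = ⊤) :
    ∃ e : extendedReesAlgebra
            (twoSidedClosure K
              ((FreeAlgebra.lift K fun i : Fin n =>
                  (ι K (Sum.inl i) : FreeAlgebra K (Fin n ⊕ Fin m))) '' (I : Set (FreeAlgebra K (Fin n)))
                ∪ Set.range fun j : Fin m => (ι K (Sum.inr j) : FreeAlgebra K (Fin n ⊕ Fin m))))
            (twoSidedClosure_isTwoSidedIdeal K _) ≃ₐ[K]
          extendedReesAlgebra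
            (twoSidedClosure K
              ((FreeAlgebra.lift K fun i : Fin n =>
                  (ι K (Sum.inl i) : FreeAlgebra K (Fin n ⊕ Fin m))) '' (J : Set (FreeAlgebra K (Fin n)))
                ∪ Set.range fun j : Fin m => (ι K (Sum.inr j) : FreeAlgebra K (Fin n ⊕ Fin m))))
            (twoSidedClosure_isTwoSidedIdeal K _),
      IsGradedReesIso e ∧
        e ⟨laurentT _, laurentT_mem _ _⟩ = ⟨laurentT _, laurentT_mem _ _⟩ := by
  obtain ⟨φ⟩ := hiso
  obtain ⟨c, hc⟩ := hgen
  let πI := RingQuot.mkAlgHom K (fun a b : FreeAlgebra K (Fin n) => a - b ∈ I)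
  let πJ := φ.symm.toAlgHom.comp (RingQuot.mkAlgHom K fun a b : FreeAlgebra K (Fin n) => a - b ∈ J)
  have hπJ (a : FreeAlgebra K (Fin n)) : πJ a = 0 ↔ a ∈ J := by
    simpa [πJ] using hJ.mkAlgHom_eq_zero_iff a
  obtain ⟨α, hα⟩ := exists_algEquiv_lift_sumElim_zero_comp_eq c
    (adjoin_range_comp_ι_eq_top (f := πI) (RingQuot.mkAlgHom_surjective K _))
    (adjoin_range_comp_ι_eq_top (f := πJ)
      (φ.symm.surjective.comp (RingQuot.mkAlgHom_surjective K _))) hc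
  refine extendedReesAlgebra.exists_isGradedReesIso_of_map_eq α.symm (Submodule.ext fun z => ?_)
  rw [Submodule.mem_map_equiv (e := α.symm.toLinearEquiv),
    mem_twoSidedClosure_iff_lift_sumElim_eq_zero πI hI.mkAlgHom_eq_zero_iff,
    mem_twoSidedClosure_iff_lift_sumElim_eq_zero πJ hπJ, ← hα]
  rfl

open FreeAlgebra in
theorem rees_algebras_of_extended_ideals_isomorphic
    {K : Type} [Field K] {n m : ℕ} (hn : 1 ≤ n) (hm : 1 ≤ m)
    (I J : Submodule K (FreeAlgebra K (Fin n)))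
    (hI : I.IsTwoSidedIdeal) (hJ : J.IsTwoSidedIdeal)
    (hiso : Nonempty
      (RingQuot (fun a b : FreeAlgebra K (Fin n) => a - b ∈ I) ≃ₐ[K]
        RingQuot (fun a b : FreeAlgebra K (Fin n) => a - b ∈ J)))
    (hgen : ∃ c : Fin m → RingQuot (fun a b : FreeAlgebra K (Fin n) => a - b ∈ I),
      Algebra.adjoin K (Set.range c) = ⊤) :
    ∃ e : extendedReesAlgebra
            (twoSidedClosure K
              ((FreeAlgebra.lift K fun i : Fin n =>
                  (ι K (Sum.inl i) : FreeAlgebra K (Fin n ⊕ Fin m))) '' (I : Set (FreeAlgebra K (Fin n)))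
                ∪ Set.range fun j : Fin m => (ι K (Sum.inr j) : FreeAlgebra K (Fin n ⊕ Fin m))))
            (twoSidedClosure_isTwoSidedIdeal K _) ≃ₐ[K]
          extendedReesAlgebra
            (twoSidedClosure K
              ((FreeAlgebra.lift K fun i : Fin n =>
                  (ι K (Sum.inl i) : FreeAlgebra K (Fin n ⊕ Fin m))) '' (J : Set (FreeAlgebra K (Fin n)))
                ∪ Set.range fun j : Fin m => (ι K (Sum.inr j) : FreeAlgebra K (Fin n ⊕ Fin m))))
            (twoSidedClosure_isTwoSidedIdeal K _),
      IsGradedReesIso e ∧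
        e ⟨laurentT _, laurentT_mem _ _⟩ = ⟨laurentT _, laurentT_mem _ _⟩ :=
  rees_algebras_of_extended_ideals_isomorphic_general I J hI hJ hiso hgen
end

section
/- Let K be a field, n, r ≥ 1, and let σ be a linearizable regular action of T_r = (K^×)^r on F_n = FreeAlgebra K (Fin n). Then there exists a maximal two-sided ideal M of F_n that is fixed by the action: σ(t)(M) = M for every t ∈ (Kˣ)^r. (Namely, M may be taken to be the two-sided ideal generated by a linearizing system of free generators β(z_1), …, β(z_n), whose quotient is K.) -/
/-!
Write `ε : F_n → K` for the augmentation `z_i ↦ 0`. An algebra endomorphism sending every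
generator into their linear span commutes with `ε`, so if `β` linearizes `σ`, the character
`ε ∘ β⁻¹` is `σ`-invariant. Its kernel is then a `σ`-stable two-sided ideal, and it is maximal
because the quotient is the field `K`.
-/

open FreeAlgebra

/-- A torus action `σ` of `(Kˣ)^r` on the free algebra is *regular* if the image of each
generator depends on `t` as a Laurent polynomial with coefficients in the free algebra. -/
def TorusActionIsRegular {K : Type} [Field K] {n r : ℕ}
    (σ : (Fin r → Kˣ) →* (FreeAlgebra K (Fin n) ≃ₐ[K] FreeAlgebra K (Fin n))) : Prop :=
  ∀ i : Fin n, ∃ a : ((Fin r → ℤ) →₀ FreeAlgebra K (Fin n)),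
    ∀ t : Fin r → Kˣ,
      σ t (ι K i) = a.sum fun m c => ((∏ j : Fin r, (t j) ^ (m j) : Kˣ) : K) • c

/-- A torus action on the free algebra is *linearizable* if some algebra automorphism `β`
conjugates it into an action mapping each generator into the linear span of the generators. -/
def TorusActionIsLinearizable {K : Type} [Field K] {n r : ℕ}
    (σ : (Fin r → Kˣ) →* (FreeAlgebra K (Fin n) ≃ₐ[K] FreeAlgebra K (Fin n))) : Prop :=
  ∃ β : FreeAlgebra K (Fin n) ≃ₐ[K] FreeAlgebra K (Fin n),
    ∀ (t : Fin r → Kˣ) (i : Fin n),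
      β.symm (σ t (β (ι K i))) ∈
        Submodule.span K (Set.range (ι K : Fin n → FreeAlgebra K (Fin n)))

theorem TwoSidedIdeal.isCoatom_ker_of_surjective {R S : Type*} [Ring R] [DivisionRing S]
    (f : R →+* S) (hf : Function.Surjective f) : IsCoatom (TwoSidedIdeal.ker f) := by
  refine ⟨fun htop => ?_, fun J hJ => ?_⟩
  · have h1 : (1 : R) ∈ TwoSidedIdeal.ker f := htop ▸ TwoSidedIdeal.mem_top _
    simp [TwoSidedIdeal.mem_ker] at h1
  · obtain ⟨x, hxJ, hxker⟩ := SetLike.exists_of_lt hJ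
    rw [TwoSidedIdeal.mem_ker] at hxker
    obtain ⟨y, hy⟩ := hf (f x)⁻¹
    have hyx : y * x - 1 ∈ TwoSidedIdeal.ker f := by
      simp [TwoSidedIdeal.mem_ker, hy, inv_mul_cancel₀ hxker]
    have hone : (1 : R) ∈ J := by
      simpa using J.sub_mem (J.mul_mem_left y x hxJ) (hJ.le hyx)
    exact J.eq_top hone

theorem AlgHom.isCoatom_ker_of_field {K A : Type*} [Field K] [Ring A] [Algebra K A]
    (φ : A →ₐ[K] K) : IsCoatom (TwoSidedIdeal.ker φ) :=
  TwoSidedIdeal.isCoatom_ker_of_surjective (φ : A →+* K)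
    fun c => ⟨algebraMap K A c, φ.commutes c⟩

namespace FreeAlgebra

variable {R X : Type*} [CommSemiring R]

theorem span_range_ι_le_ker_algebraMapInv :
    Submodule.span R (Set.range (ι R : X → FreeAlgebra R X)) ≤
      LinearMap.ker (algebraMapInv : FreeAlgebra R X →ₐ[R] R).toLinearMap :=
  Submodule.span_le.mpr <| by
    rintro _ ⟨i, rfl⟩
    simp [algebraMapInv]

theorem algebraMapInv_comp_of_forall_ι_mem_span (α : FreeAlgebra R X →ₐ[R] FreeAlgebra R X)
    (hα : ∀ i, α (ι R i) ∈ Submodule.span R (Set.range (ι R : X → FreeAlgebra R X))) :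
    algebraMapInv.comp α = algebraMapInv := by
  refine hom_ext (funext fun i => ?_)
  have hαi := span_range_ι_le_ker_algebraMapInv (hα i)
  rw [LinearMap.mem_ker] at hαi
  simpa [algebraMapInv] using hαi

end FreeAlgebra

theorem linearizable_action_fixes_maximal_ideal_general
    {K : Type} [Field K] {n r : ℕ}
    (σ : (Fin r → Kˣ) →* (FreeAlgebra K (Fin n) ≃ₐ[K] FreeAlgebra K (Fin n)))
    (hlin : TorusActionIsLinearizable σ) :
    ∃ M : TwoSidedIdeal (FreeAlgebra K (Fin n)),
      IsCoatom M ∧ ∀ (t : Fin r → Kˣ) (x : FreeAlgebra K (Fin n)), x ∈ M ↔ σ t x ∈ M := by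
  obtain ⟨β, hβ⟩ := hlin
  let φ : FreeAlgebra K (Fin n) →ₐ[K] K := algebraMapInv.comp β.symm.toAlgHom
  have hφ_invariant (t : Fin r → Kˣ) (x : FreeAlgebra K (Fin n)) : φ (σ t x) = φ x := by
    have hconj := algebraMapInv_comp_of_forall_ι_mem_span
      (β.symm.toAlgHom.comp ((σ t).toAlgHom.comp β.toAlgHom)) (hβ t)
    simpa [φ] using DFunLike.congr_fun hconj (β.symm x)
  refine ⟨TwoSidedIdeal.ker φ, φ.isCoatom_ker_of_field, fun t x => ?_⟩
  simp only [TwoSidedIdeal.mem_ker, hφ_invariant]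

/-- A linearizable regular torus action on the free algebra fixes some maximal two-sided
ideal `M` (namely, the ideal generated by a linearizing system of free generators):
`σ(t)(M) = M` for all `t`. -/
theorem linearizable_action_fixes_maximal_ideal
    {K : Type} [Field K] {n r : ℕ} (hn : 1 ≤ n) (hr : 1 ≤ r)
    (σ : (Fin r → Kˣ) →* (FreeAlgebra K (Fin n) ≃ₐ[K] FreeAlgebra K (Fin n)))
    (hreg : TorusActionIsRegular σ)
    (hlin : TorusActionIsLinearizable σ) :
    ∃ M : TwoSidedIdeal (FreeAlgebra K (Fin n)),
      IsCoatom M ∧ ∀ (t : Fin r → Kˣ) (x : FreeAlgebra K (Fin n)), x ∈ M ↔ σ t x ∈ M :=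
  linearizable_action_fixes_maximal_ideal_general σ hlin
end
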